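/- Let p > 1, N ≥ 2 an integer, k ≠ 0, and δ ∈ (0, π). If H : [0, δ) → ℝ is differentiable on [0, δ) (one-sided at 0) with H(0) = 0 and satisfies the H-equation on (0, δ), and H' is continuous at 0, then H'(0) = (k²·(1-p) + k·(p-N))/(N-1); equivalently, H'(0) = (k·(1-p)/(N-1))·(k - (N-p)/(1-p)). In particular, if 1 < p < N then H'(0) = 0 when k = (N-p)/(1-p), and H'(0) < 0 when k < (N-p)/(1-p). -/

import Mathlib

/-!
Near `0` we have `H x * cot x = (H x / x) * (x * cot x) → H'(0)`, and `H x → 0`,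
`H' x → H'(0)`. Letting `x → 0⁺` in the H-equation therefore gives
`k² H'(0) = (1-p) k⁴ + k² (k(p-N) + (2-N) H'(0))`, a linear equation for `H'(0)`;
dividing by `k² ≠ 0` and solving yields the slope.
-/

noncomputable section
open Real Set Filter Topology

def HEqOn (p : ℝ) (N : ℕ) (k : ℝ) (H : ℝ → ℝ) (I : Set ℝ) : Prop :=
  ∀ x ∈ I,
    ((p - 1) * (H x) ^ 2 + k ^ 2) * deriv H x =
      (1 - p) * ((H x) ^ 2 + k ^ 2) ^ 2
        + ((H x) ^ 2 + k ^ 2) * (k * (p - (N : ℝ)) + (2 - (N : ℝ)) * H x * Real.cot x)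

theorem Real.tendsto_mul_cot_nhdsNE_zero :
    Tendsto (fun x => x * cot x) (𝓝[≠] 0) (𝓝 1) := by
  have hcont : ContinuousAt (fun x => cos x / sinc x) 0 :=
    continuous_cos.continuousAt.div continuous_sinc.continuousAt (by simp)
  have hlim : Tendsto (fun x => cos x / sinc x) (𝓝[≠] 0) (𝓝 1) := by
    simpa using hcont.tendsto.mono_left nhdsWithin_le_nhds
  refine hlim.congr' ?_
  filter_upwards [self_mem_nhdsWithin] with x hx
  rw [sinc_of_ne_zero hx, cot_eq_cos_div_sin, div_div_eq_mul_div, mul_div_right_comm, mul_comm]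

theorem HasDerivWithinAt.tendsto_div_nhdsGT_zero {f : ℝ → ℝ} {f' : ℝ}
    (hf : HasDerivWithinAt f f' (Ici 0) 0) (hf0 : f 0 = 0) :
    Tendsto (fun x => f x / x) (𝓝[>] 0) (𝓝 f') := by
  rw [← hasDerivWithinAt_Ioi_iff_Ici, hasDerivWithinAt_iff_tendsto_slope' self_notMem_Ioi] at hf
  simpa [slope_fun_def_field, hf0] using hf

theorem HasDerivWithinAt.tendsto_mul_cot_nhdsGT_zero {f : ℝ → ℝ} {f' : ℝ}
    (hf : HasDerivWithinAt f f' (Ici 0) 0) (hf0 : f 0 = 0) :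
    Tendsto (fun x => f x * cot x) (𝓝[>] 0) (𝓝 f') := by
  have hlim := (hf.tendsto_div_nhdsGT_zero hf0).mul
    (tendsto_mul_cot_nhdsNE_zero.mono_left (nhdsWithin_mono _ fun x (hx : 0 < x) => hx.ne'))
  rw [mul_one] at hlim
  refine hlim.congr' ?_
  filter_upwards [self_mem_nhdsWithin] with x hx
  field_simp [(show (0 : ℝ) < x from hx).ne']

theorem HEqOn.limit_eq {p : ℝ} {N : ℕ} {k δ L : ℝ} {H : ℝ → ℝ} (hδ0 : 0 < δ)
    (heq : HEqOn p N k H (Ioo 0 δ)) (hd0 : HasDerivWithinAt H L (Ici 0) 0) (hH0 : H 0 = 0)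
    (hcont : Tendsto (deriv H) (𝓝[>] 0) (𝓝 L)) :
    k ^ 2 * L = (1 - p) * (k ^ 2) ^ 2 + k ^ 2 * (k * (p - N) + (2 - N) * L) := by
  have hHlim : Tendsto H (𝓝[>] 0) (𝓝 0) := by
    simpa [hH0] using
      hd0.continuousWithinAt.tendsto.mono_left (nhdsWithin_mono _ Ioi_subset_Ici_self)
  have hHsq : Tendsto (fun x => H x ^ 2 + k ^ 2) (𝓝[>] 0) (𝓝 (k ^ 2)) := by
    simpa using (hHlim.pow 2).add_const (k ^ 2)
  have hLHS : Tendsto (fun x => ((p - 1) * H x ^ 2 + k ^ 2) * deriv H x) (𝓝[>] 0)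
      (𝓝 (k ^ 2 * L)) := by
    simpa using ((((hHlim.pow 2).const_mul (p - 1)).add_const (k ^ 2)).mul hcont)
  have hRHS : Tendsto (fun x => (1 - p) * (H x ^ 2 + k ^ 2) ^ 2
        + (H x ^ 2 + k ^ 2) * (k * (p - N) + (2 - N) * (H x * cot x))) (𝓝[>] 0)
      (𝓝 ((1 - p) * (k ^ 2) ^ 2 + k ^ 2 * (k * (p - N) + (2 - N) * L))) :=
    ((hHsq.pow 2).const_mul _).add
      (hHsq.mul (((hd0.tendsto_mul_cot_nhdsGT_zero hH0).const_mul _).const_add _))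
  refine tendsto_nhds_unique (hLHS.congr' ?_) hRHS
  filter_upwards [Ioo_mem_nhdsGT hδ0] with x hx
  rw [heq x hx]
  ring

theorem eq_initialSlope_of_limit_eq {p n k L : ℝ} (hk : k ≠ 0) (hn : n ≠ 1)
    (h : k ^ 2 * L = (1 - p) * (k ^ 2) ^ 2 + k ^ 2 * (k * (p - n) + (2 - n) * L)) :
    L = (k ^ 2 * (1 - p) + k * (p - n)) / (n - 1) := by
  have hlin : L = (1 - p) * k ^ 2 + k * (p - n) + (2 - n) * L := by
    apply mul_left_cancel₀ (pow_ne_zero 2 hk)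
    linear_combination h
  rw [eq_div_iff (sub_ne_zero.mpr hn)]
  linear_combination hlin

theorem initialSlope_factor {p n : ℝ} (k : ℝ) (hp : p ≠ 1) :
    (k ^ 2 * (1 - p) + k * (p - n)) / (n - 1) =
      k * (1 - p) / (n - 1) * (k - (n - p) / (1 - p)) := by
  have : 1 - p ≠ 0 := sub_ne_zero.mpr hp.symm
  field_simp
  ring

theorem initialSlope_factor_neg {p n k : ℝ} (hp : 1 < p) (hpn : p < n)
    (hk : k < (n - p) / (1 - p)) :
    k * (1 - p) / (n - 1) * (k - (n - p) / (1 - p)) < 0 := by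
  have hk0 : k < 0 := hk.trans (div_neg_of_pos_of_neg (by linarith) (by linarith))
  refine mul_neg_of_pos_of_neg (div_pos ?_ (by linarith)) (by linarith)
  nlinarith

theorem H_initial_slope_general (p : ℝ) (hp : 1 < p) (N : ℕ) (hN : 2 ≤ N) (k : ℝ) (hk : k ≠ 0)
    (δ : ℝ) (hδ0 : 0 < δ)
    (H : ℝ → ℝ)
    (hd0 : DifferentiableWithinAt ℝ H (Ici 0) 0)
    (hH0 : H 0 = 0)
    (heq : HEqOn p N k H (Ioo 0 δ))
    (hcont : Tendsto (deriv H) (nhdsWithin 0 (Ioi 0)) (nhds (derivWithin H (Ici 0) 0))) :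
    derivWithin H (Ici 0) 0 = (k ^ 2 * (1 - p) + k * (p - (N : ℝ))) / ((N : ℝ) - 1) ∧
    derivWithin H (Ici 0) 0 = k * (1 - p) / ((N : ℝ) - 1) * (k - ((N : ℝ) - p) / (1 - p)) ∧
    (p < (N : ℝ) →
      (k = ((N : ℝ) - p) / (1 - p) → derivWithin H (Ici 0) 0 = 0) ∧
      (k < ((N : ℝ) - p) / (1 - p) → derivWithin H (Ici 0) 0 < 0)) := by
  have hN1 : (N : ℝ) ≠ 1 := by
    have : (2 : ℝ) ≤ N := by exact_mod_cast hN
    linarith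
  have hslope := eq_initialSlope_of_limit_eq hk hN1
    (heq.limit_eq hδ0 hd0.hasDerivWithinAt hH0 hcont)
  have hfactor := hslope.trans (initialSlope_factor k hp.ne')
  refine ⟨hslope, hfactor, fun hpN => ⟨fun hkc => ?_, fun hkc => ?_⟩⟩
  · rw [hfactor, hkc, sub_self, mul_zero]
  · exact hfactor ▸ initialSlope_factor_neg hp hpN hkc

/-- The initial slope of a solution of the H-equation with `H(0) = 0`:
`H'(0) = (k²(1-p) + k(p-N))/(N-1) = (k(1-p)/(N-1))·(k - (N-p)/(1-p))`; in particular, for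
`1 < p < N`, `H'(0) = 0` when `k = (N-p)/(1-p)` and `H'(0) < 0` when `k < (N-p)/(1-p)`. -/
theorem H_initial_slope (p : ℝ) (hp : 1 < p) (N : ℕ) (hN : 2 ≤ N) (k : ℝ) (hk : k ≠ 0)
    (δ : ℝ) (hδ0 : 0 < δ) (hδ : δ < π)
    (H : ℝ → ℝ)
    (hd0 : DifferentiableWithinAt ℝ H (Ici 0) 0)
    (hd : ∀ x ∈ Ioo (0 : ℝ) δ, DifferentiableAt ℝ H x)
    (hH0 : H 0 = 0)
    (heq : HEqOn p N k H (Ioo 0 δ))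
    (hcont : Tendsto (deriv H) (nhdsWithin 0 (Ioi 0)) (nhds (derivWithin H (Ici 0) 0))) :
    derivWithin H (Ici 0) 0 = (k ^ 2 * (1 - p) + k * (p - (N : ℝ))) / ((N : ℝ) - 1) ∧
    derivWithin H (Ici 0) 0 = k * (1 - p) / ((N : ℝ) - 1) * (k - ((N : ℝ) - p) / (1 - p)) ∧
    (p < (N : ℝ) →
      (k = ((N : ℝ) - p) / (1 - p) → derivWithin H (Ici 0) 0 = 0) ∧
      (k < ((N : ℝ) - p) / (1 - p) → derivWithin H (Ici 0) 0 < 0)) :=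
  H_initial_slope_general p hp N hN k hk δ hδ0 H hd0 hH0 heq hcont
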